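/- Let p be a design on N ≥ 2 units satisfying positivity, let β ∈ ℝ, and suppose the treatment effects are homogeneous: Y_i(1) − Y_i(0) = τ for all i. Let ĉ(v) ∈ ℝ^N be the β-imputed vector with coordinates ĉ_i(v) = v_i·(Y_i(1) − π_i·β) + (1 − v_i)·(Y_i(0) + (1 − π_i)·β). Then for every assignment vector v ∈ {0,1}^N, ψ(ĉ(v)) = Var(τ̂) + A₁(v) + A₂(v), where, with N_c(w) = Σ_i (1 − w_i), A₁(v) = ((τ − β)²/N²)·Σ_w p_w·[ (Σ_{i : w_i = 1} v_i/π_i − Σ_{i : w_i = 0} v_i/(1 − π_i)) − (Σ_{i : w_i = 1} 1/π_i − N) ]² and A₂(v) = (2(τ − β)/N²)·Σ_w p_w·[ (Σ_{i : w_i = 1} Y_i(0)/π_i − Σ_{i : w_i = 0} Y_i(0)/(1 − π_i)) + τ·(Σ_{i : w_i = 1} (1 − π_i)/π_i − N_c(w)) ]·[ (Σ_{i : w_i = 1} v_i/π_i − Σ_{i : w_i = 0} v_i/(1 − π_i)) − (Σ_{i : w_i = 1} (1 − π_i)/π_i − N_c(w)) ]. -/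
import Mathlib


open Finset

noncomputable section

/-- Propensity score `π_i = Pr(W_i = 1)` of a design `p` on `N` units. -/
def piS (N : ℕ) (p : (Fin N → Bool) → ℝ) (i : Fin N) : ℝ :=
  ∑ w : Fin N → Bool, if w i then p w else 0

/-- Expectation under the design. -/
def expct (N : ℕ) (p f : (Fin N → Bool) → ℝ) : ℝ :=
  ∑ w : Fin N → Bool, p w * f w

/-- Average treatment effect. -/
def tauATE (N : ℕ) (Y1 Y0 : Fin N → ℝ) : ℝ :=
  (1 / (N : ℝ)) * ∑ i, (Y1 i - Y0 i)

/-- Horvitz–Thompson estimator. -/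
def tauHT (N : ℕ) (p : (Fin N → Bool) → ℝ) (Y1 Y0 : Fin N → ℝ) (w : Fin N → Bool) : ℝ :=
  (1 / (N : ℝ)) * (∑ i, if w i then Y1 i / piS N p i else 0)
    - (1 / (N : ℝ)) * (∑ i, if w i then 0 else Y0 i / (1 - piS N p i))

/-- Design-based variance of the Horvitz–Thompson estimator. -/
def varHT (N : ℕ) (p : (Fin N → Bool) → ℝ) (Y1 Y0 : Fin N → ℝ) : ℝ :=
  expct N p (fun w => (tauHT N p Y1 Y0 w - tauATE N Y1 Y0) ^ 2)

/-- `ψ(x) = (1/N²)·Σ_w p_w·(Σ_{w_i=1} x_i/π_i − Σ_{w_i=0} x_i/(1 − π_i))²`. -/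
def psiGen (N : ℕ) (p : (Fin N → Bool) → ℝ) (x : Fin N → ℝ) : ℝ :=
  (1 / (N : ℝ) ^ 2) * ∑ w : Fin N → Bool, p w *
    ((∑ i, if w i then x i / piS N p i else 0)
      - ∑ i, if w i then 0 else x i / (1 - piS N p i)) ^ 2

/-- Real indicator of a Boolean. -/
def indR (b : Bool) : ℝ := if b then 1 else 0

/-- The `β`-imputed vector for a general design:
`ĉ_i(v) = v_i·(Y_i(1) − π_i·β) + (1 − v_i)·(Y_i(0) + (1 − π_i)·β)`. -/
def cHatGenBeta (N : ℕ) (p : (Fin N → Bool) → ℝ) (Y1 Y0 : Fin N → ℝ) (β : ℝ)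
    (v : Fin N → Bool) (i : Fin N) : ℝ :=
  if v i then Y1 i - piS N p i * β else Y0 i + (1 - piS N p i) * β

/-- `Σ_{i : w_i = 1} v_i/π_i − Σ_{i : w_i = 0} v_i/(1 − π_i)`. -/
def Sv (N : ℕ) (p : (Fin N → Bool) → ℝ) (v w : Fin N → Bool) : ℝ :=
  (∑ i, if w i then indR (v i) / piS N p i else 0)
    - ∑ i, if w i then 0 else indR (v i) / (1 - piS N p i)

/-- Number of control units `N_c(w)` (as a real number). -/
def NcR (N : ℕ) (w : Fin N → Bool) : ℝ :=
  ∑ i : Fin N, if w i then (0 : ℝ) else 1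

/-- The term `A₁(v)` of the imputation decomposition. -/
def A1 (N : ℕ) (p : (Fin N → Bool) → ℝ) (Y1 Y0 : Fin N → ℝ) (β : ℝ)
    (v : Fin N → Bool) : ℝ :=
  ((tauATE N Y1 Y0 - β) ^ 2 / (N : ℝ) ^ 2) * ∑ w : Fin N → Bool, p w *
    (Sv N p v w - ((∑ i, if w i then 1 / piS N p i else 0) - (N : ℝ))) ^ 2

/-- The term `A₂(v)` of the imputation decomposition. -/
def A2 (N : ℕ) (p : (Fin N → Bool) → ℝ) (Y1 Y0 : Fin N → ℝ) (β : ℝ)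
    (v : Fin N → Bool) : ℝ :=
  (2 * (tauATE N Y1 Y0 - β) / (N : ℝ) ^ 2) * ∑ w : Fin N → Bool, p w *
    (((∑ i, if w i then Y0 i / piS N p i else 0)
        - ∑ i, if w i then 0 else Y0 i / (1 - piS N p i))
      + tauATE N Y1 Y0 *
          ((∑ i, if w i then (1 - piS N p i) / piS N p i else 0) - NcR N w)) *
    (Sv N p v w
      - ((∑ i, if w i then (1 - piS N p i) / piS N p i else 0) - NcR N w))

/-- Theorem A1 (imputation decomposition under homogeneity): for every assignment
vector `v`, `ψ(ĉ(v)) = Var(τ̂) + A₁(v) + A₂(v)`. -/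
theorem imputation_decomposition
    (N : ℕ) (hN : 2 ≤ N)
    (p : (Fin N → Bool) → ℝ) (hp : ∀ w, 0 ≤ p w)
    (hsum : ∑ w : Fin N → Bool, p w = 1)
    (hpos : ∀ i, 0 < piS N p i ∧ piS N p i < 1)
    (Y1 Y0 : Fin N → ℝ) (β : ℝ)
    (hhom : ∀ i, Y1 i - Y0 i = tauATE N Y1 Y0) :
    ∀ v : Fin N → Bool,
      psiGen N p (cHatGenBeta N p Y1 Y0 β v)
        = varHT N p Y1 Y0 + A1 N p Y1 Y0 β v + A2 N p Y1 Y0 β v := by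
  
  intro v
  have hn0 : (N : ℝ) ≠ 0 := by
    have : (0:ℕ) < N := by omega
    exact_mod_cast this.ne'
  have hπ0 : ∀ i, piS N p i ≠ 0 := fun i => (hpos i).1.ne'
  have hπ1 : ∀ i, (1 : ℝ) - piS N p i ≠ 0 := fun i => sub_ne_zero.mpr (hpos i).2.ne'
  have hY1 : ∀ i, Y1 i = Y0 i + tauATE N Y1 Y0 := fun i => by have := hhom i; linarith
  have hNone : ∑ _i : Fin N, (1:ℝ) = (N:ℝ) := by simp
  -- N * (tauHT - tau) as a difference of sums
  have hU : ∀ w : Fin N → Bool, (N:ℝ) * (tauHT N p Y1 Y0 w - tauATE N Y1 Y0)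
      = ((∑ i, if w i then Y1 i / piS N p i else 0)
         - ∑ i, if w i then 0 else Y0 i / (1 - piS N p i))
        - ∑ i : Fin N, (Y1 i - Y0 i) := by
    intro w
    simp only [tauHT, tauATE]
    field_simp
    try ring
  -- the two expressions for D(w) agree
  have hD : ∀ w : Fin N → Bool,
      (∑ i, if w i then 1 / piS N p i else 0) - (N:ℝ)
      = (∑ i, if w i then (1 - piS N p i) / piS N p i else 0)
        - ∑ i : Fin N, (if w i then (0:ℝ) else 1) := by
    intro w
    rw [← hNone]
    simp only [← Finset.sum_sub_distrib]
    refine Finset.sum_congr rfl fun i _ => ?_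
    cases hw : w i <;> simp [hw] <;> field_simp [hπ0 i]
  -- the first factor of A2 equals N*(tauHT - tau)
  have hU0 : ∀ w : Fin N → Bool,
      ((∑ i, if w i then Y0 i / piS N p i else 0)
        - ∑ i, if w i then 0 else Y0 i / (1 - piS N p i))
      + tauATE N Y1 Y0 *
          ((∑ i, if w i then (1 - piS N p i) / piS N p i else 0)
            - ∑ i : Fin N, (if w i then (0:ℝ) else 1))
      = (N:ℝ) * (tauHT N p Y1 Y0 w - tauATE N Y1 Y0) := by
    intro w
    rw [hU w]
    simp only [Finset.mul_sum, ← Finset.sum_sub_distrib, ← Finset.sum_add_distrib]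
    refine Finset.sum_congr rfl fun i _ => ?_
    cases hw : w i <;> simp [hw, hY1 i] <;> field_simp [hπ0 i, hπ1 i] <;> ring
  -- the key pointwise identity for the imputed contrast
  have key : ∀ w : Fin N → Bool,
      ((∑ i, if w i then cHatGenBeta N p Y1 Y0 β v i / piS N p i else 0)
        - ∑ i, if w i then 0 else cHatGenBeta N p Y1 Y0 β v i / (1 - piS N p i))
      = (N:ℝ) * (tauHT N p Y1 Y0 w - tauATE N Y1 Y0)
        + (tauATE N Y1 Y0 - β) * (Sv N p v w
            - ((∑ i, if w i then (1 - piS N p i) / piS N p i else 0)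
               - ∑ i : Fin N, (if w i then (0:ℝ) else 1))) := by
    intro w
    rw [hU w, Sv]
    simp only [Finset.mul_sum, ← Finset.sum_sub_distrib, ← Finset.sum_add_distrib]
    refine Finset.sum_congr rfl fun i _ => ?_
    cases hw : w i <;> cases hv : v i <;>
      simp [hw, hv, cHatGenBeta, indR, hY1 i] <;>
      field_simp [hπ0 i, hπ1 i] <;> ring
  -- main computation
  simp only [psiGen, varHT, expct, A1, A2, NcR]
  simp only [Finset.mul_sum, ← Finset.sum_add_distrib]
  refine Finset.sum_congr rfl fun w _ => ?_
  rw [key w, hD w, hU0 w]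
  field_simp
  ring
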